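/- Characterization of the WG solution via the Schur complement: let ū_b ∈ B_h satisfy ū_b = Q_b g on ∂Ω and let ū_0 be determined elementwise by a_T(ū_h, v) − b_T(v, p_h) = (f, v_0)_T for all v = {v_0, 0}. Then (ū_h; p_h) solves the weak Galerkin scheme a(ū_h, v) − b(v, p_h) = (f, v_0), b(ū_h, q) = 0 (for all v ∈ 𝒱_h^0, q ∈ W_h) if and only if the operator equation S_f(ū_b; p_h) = 0 holds. -/

import Mathlib

/-- (Characterization of the WG solution via the Schur complement.) Let
`ū_b ∈ B_h` satisfy the boundary condition and let `ū₀` be determined elementwise by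
`a_T(ū_h, v) − b_T(v, p_h) = (f, v₀)_T` for all `v = {v₀, 0}` (hypothesis `hD`), and let
`ζ_h` be the local multiplier determined by `c_T(v, ζ_{h,T}) = a_T(ū_h, v) − b_T(v, p_h)`
for all `v = {0, v_b}` (hypothesis `hzeta`), so that `S_f(ū_b; p_h) = ⟨⟨ζ_h⟩⟩ = sim ζ`.
Then `(ū_h; p_h)` solves the weak Galerkin scheme
`a(ū_h, v) − b(v, p_h) = (f, v₀)` for all `v ∈ 𝒱_h⁰` and `b(ū_h, q) = 0` for all `q ∈ W_h`
if and only if `S_f(ū_b; p_h) = 0`. Weak functions are modeled as pairs `(v₀, v_b) ∈ V0i × B`;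
`hf` records that the load functional only sees the interior component; `hnd` and `hXic`
record that the similarity of `ζ` vanishes iff `c(v, ζ) = 0` for all `v ∈ 𝒱_h⁰`; `hmass`
records the discrete incompressibility satisfied by the reduced-system pair `(ū_b, p_h)`. -/
theorem stmt15 {B W V0i Λ B' : Type*}
    [AddCommGroup B] [Module ℝ B] [AddCommGroup W] [Module ℝ W]
    [AddCommGroup V0i] [Module ℝ V0i] [AddCommGroup Λ] [Module ℝ Λ]
    [AddCommGroup B'] [Module ℝ B']
    (Vtest : Submodule ℝ (V0i × B))            -- the test space 𝒱_h⁰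
    (aF : V0i × B →ₗ[ℝ] V0i × B →ₗ[ℝ] ℝ)
    (bF : V0i × B →ₗ[ℝ] W →ₗ[ℝ] ℝ)
    (fF : V0i × B →ₗ[ℝ] ℝ)                     -- v ↦ (f, v₀)
    (bW : V0i × B →ₗ[ℝ] W →ₗ[ℝ] ℝ)             -- the divergence form b(·,·) of (WG2)
    (cpair : B →ₗ[ℝ] Λ →ₗ[ℝ] ℝ)
    (sim : Λ →ₗ[ℝ] B')                         -- similarity ⟨⟨·⟩⟩
    (ub : B) (u0 : V0i) (p : W) (zeta : Λ)
    -- the load functional only acts on the interior component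
    (hf : ∀ (v0 : V0i) (vb : B), fF (v0, vb) = fF (v0, 0))
    -- Step 1: ū₀ solves the interior local problems with source f
    (hD : ∀ v0 : V0i, aF (u0, ub) (v0, 0) - bF (v0, 0) p = fF (v0, 0))
    -- Step 2: ζ_h solves the local multiplier problems
    (hzeta : ∀ vb : B, cpair vb zeta = aF (u0, ub) (0, vb) - bF (0, vb) p)
    -- the similarity of ζ' vanishes iff ζ' annihilates the interface components of 𝒱_h⁰
    (hnd : ∀ ζ' : Λ, (∀ v ∈ Vtest, cpair (Prod.snd v) ζ' = 0) → sim ζ' = 0)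
    (hXic : ∀ ζ' : Λ, sim ζ' = 0 → ∀ v ∈ Vtest, cpair (Prod.snd v) ζ' = 0)
    -- discrete incompressibility of ū_h (part of the reduced system for (ū_b, p_h))
    (hmass : ∀ q : W, bW (u0, ub) q = 0) :
    ((∀ v ∈ Vtest, aF (u0, ub) v - bF v p = fF v) ∧ (∀ q : W, bW (u0, ub) q = 0))
      ↔ sim zeta = 0 := by
  have key : ∀ (v0 : V0i) (vb : B),
      aF (u0, ub) (v0, vb) - bF (v0, vb) p - fF (v0, vb) = cpair vb zeta := by
    intro v0 vb
    have h1 : aF (u0, ub) (v0, vb) = aF (u0, ub) (v0, 0) + aF (u0, ub) (0, vb) := by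
      rw [← map_add]; norm_num
    have h2 : bF (v0, vb) p = bF (v0, 0) p + bF (0, vb) p := by
      rw [← LinearMap.add_apply, ← map_add]; norm_num
    have h3 : fF ((0 : V0i), vb) = 0 := by
      rw [hf 0 vb]; exact map_zero fF
    have h4 := hf v0 vb
    have h5 := hD v0
    have h6 := hzeta vb
    linarith
  constructor
  · rintro ⟨hsol, _⟩
    apply hnd
    intro v hv
    have hk := key v.1 v.2
    rw [Prod.mk.eta] at hk
    have := hsol v hv
    linarith
  · intro hs
    refine ⟨?_, hmass⟩
    intro v hv
    have hk := key v.1 v.2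
    rw [Prod.mk.eta] at hk
    have hc := hXic zeta hs v hv
    linarith
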